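/- arXiv:2505.15409 — 3 statements merged into one kernel-verified Lean document; each statement's English description precedes it below -/
import Mathlib

section
/- For every i ≤ m and j ≤ n, and every alignment γ of the first i elements of as and the first j elements of bs, the cost of γ is at least δ(i,j); that is, the edit-distance recursion is a lower bound for the cost of every alignment of the corresponding prefixes. -/
/-! Induct on the alignment from its end. The last move of an alignment of the prefixes of
lengths `i` and `j` is a log, model or synchronous move; removing it leaves an alignment of the
prefixes of lengths `(i - 1, j)`, `(i, j - 1)` or `(i - 1, j - 1)`, and the matching branch of the
minimum in the recursion bounds `δ i j` by the cost of that move plus `δ` of the shorter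
prefixes. -/

/-- An alignment of `as` and `bs` is a list of moves (pairs of options, never both
`none`) whose first-component projection is `as` and second-component projection is `bs`. -/
def IsAlignment {A B : Type*} (γ : List (Option A × Option B))
    (as : List A) (bs : List B) : Prop :=
  (∀ m ∈ γ, m ≠ ((none : Option A), (none : Option B))) ∧
  γ.filterMap Prod.fst = as ∧
  γ.filterMap Prod.snd = bs

/-- Cost of a single move. -/
def moveCost {A B : Type*} (PL : A → ℕ∞) (PM : B → ℕ∞) (Psync : A → B → ℕ∞) :
    Option A × Option B → ℕ∞
  | (some a, none) => PL a
  | (none, some b) => PM b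
  | (some a, some b) => Psync a b
  | (none, none) => 0

/-- Cost of an alignment: the sum of the costs of its moves. -/
def alignCost {A B : Type*} (PL : A → ℕ∞) (PM : B → ℕ∞) (Psync : A → B → ℕ∞)
    (γ : List (Option A × Option B)) : ℕ∞ :=
  (γ.map (moveCost PL PM Psync)).sum

theorem List.exists_eq_take_of_take_eq_append_singleton {α : Type*} {l p : List α} {a : α}
    {i : ℕ} (hi : i ≤ l.length) (h : l.take i = p ++ [a]) :
    ∃ k, ∃ hk : k < l.length, i = k + 1 ∧ p = l.take k ∧ a = l[k] := by
  obtain _ | k := i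
  · simp at h
  · have hk : k < l.length := hi
    rw [← List.take_concat_get' l k hk, List.append_singleton_inj] at h
    exact ⟨k, hk, rfl, h.1.symm, h.2.symm⟩

section Alignment

variable {A B : Type*}

theorem IsAlignment.exists_of_append_singleton {γ : List (Option A × Option B)}
    {oa : Option A} {ob : Option B} {as : List A} {bs : List B}
    (h : IsAlignment (γ ++ [(oa, ob)]) as bs) :
    (oa, ob) ≠ (none, none) ∧ ∃ as' bs', IsAlignment γ as' bs' ∧
      as = as' ++ oa.toList ∧ bs = bs' ++ ob.toList := by
  obtain ⟨hne, hfst, hsnd⟩ := h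
  refine ⟨hne _ (by simp), _, _, ⟨fun m hm ↦ hne m (by simp [hm]), rfl, rfl⟩, ?_, ?_⟩
  · cases oa <;> simp [← hfst]
  · cases ob <;> simp [← hsnd]

theorem alignCost_append_singleton (PL : A → ℕ∞) (PM : B → ℕ∞) (Psync : A → B → ℕ∞)
    (γ : List (Option A × Option B)) (m : Option A × Option B) :
    alignCost PL PM Psync (γ ++ [m]) = alignCost PL PM Psync γ + moveCost PL PM Psync m := by
  simp [alignCost]

variable {PL : A → ℕ∞} {PM : B → ℕ∞} {Psync : A → B → ℕ∞}
  {as : List A} {bs : List B} {δ : ℕ → ℕ → ℕ∞}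

theorem le_moveCost_add_of_take_eq_append
    (hL : ∀ i j (hi : i < as.length), j ≤ bs.length → δ (i + 1) j ≤ PL as[i] + δ i j)
    (hM : ∀ i j (hj : j < bs.length), i ≤ as.length → δ i (j + 1) ≤ PM bs[j] + δ i j)
    (hS : ∀ i j (hi : i < as.length) (hj : j < bs.length),
      δ (i + 1) (j + 1) ≤ Psync as[i] bs[j] + δ i j)
    {i j : ℕ} (hi : i ≤ as.length) (hj : j ≤ bs.length)
    {oa : Option A} {ob : Option B} (hne : (oa, ob) ≠ (none, none))
    {as' : List A} {bs' : List B}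
    (has : as.take i = as' ++ oa.toList) (hbs : bs.take j = bs' ++ ob.toList) :
    ∃ i' ≤ as.length, ∃ j' ≤ bs.length, as' = as.take i' ∧ bs' = bs.take j' ∧
      δ i j ≤ moveCost PL PM Psync (oa, ob) + δ i' j' := by
  match oa, ob with
  | none, none => exact absurd rfl hne
  | some a, none =>
    obtain ⟨k, hk, rfl, rfl, rfl⟩ := List.exists_eq_take_of_take_eq_append_singleton hi has
    exact ⟨k, hk.le, j, hj, rfl, by simpa using hbs.symm, hL k j hk hj⟩
  | none, some b =>
    obtain ⟨l, hl, rfl, rfl, rfl⟩ := List.exists_eq_take_of_take_eq_append_singleton hj hbs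
    exact ⟨i, hi, l, hl.le, by simpa using has.symm, rfl, hM i l hl hi⟩
  | some a, some b =>
    obtain ⟨k, hk, rfl, rfl, rfl⟩ := List.exists_eq_take_of_take_eq_append_singleton hi has
    obtain ⟨l, hl, rfl, rfl, rfl⟩ := List.exists_eq_take_of_take_eq_append_singleton hj hbs
    exact ⟨k, hk.le, l, hl.le, rfl, rfl, hS k l hk hl⟩

theorem le_alignCost_of_isAlignment_take
    (h00 : δ 0 0 = 0)
    (hL : ∀ i j (hi : i < as.length), j ≤ bs.length → δ (i + 1) j ≤ PL as[i] + δ i j)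
    (hM : ∀ i j (hj : j < bs.length), i ≤ as.length → δ i (j + 1) ≤ PM bs[j] + δ i j)
    (hS : ∀ i j (hi : i < as.length) (hj : j < bs.length),
      δ (i + 1) (j + 1) ≤ Psync as[i] bs[j] + δ i j)
    {γ : List (Option A × Option B)} {i j : ℕ} (hi : i ≤ as.length) (hj : j ≤ bs.length)
    (h : IsAlignment γ (as.take i) (bs.take j)) :
    δ i j ≤ alignCost PL PM Psync γ := by
  induction γ using List.reverseRecOn generalizing i j with
  | nil =>
    obtain ⟨-, has, hbs⟩ := h
    obtain rfl : i = 0 := by simpa [hi] using congrArg List.length has.symm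
    obtain rfl : j = 0 := by simpa [hj] using congrArg List.length hbs.symm
    exact h00.trans_le zero_le
  | append_singleton γ m ih =>
    obtain ⟨hne, as', bs', hγ, has, hbs⟩ := h.exists_of_append_singleton
    obtain ⟨i', hi', j', hj', rfl, rfl, hstep⟩ :=
      le_moveCost_add_of_take_eq_append hL hM hS hi hj hne has hbs
    calc δ i j ≤ moveCost PL PM Psync m + δ i' j' := hstep
      _ ≤ moveCost PL PM Psync m + alignCost PL PM Psync γ := by
        gcongr
        exact ih hi' hj' hγ
      _ = alignCost PL PM Psync (γ ++ [m]) := by rw [alignCost_append_singleton, add_comm]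

end Alignment

/-- The edit-distance recursion is a lower bound for the cost of every alignment of prefixes. -/
theorem delta_le_alignCost
    {A B : Type*} (PL : A → ℕ∞) (PM : B → ℕ∞) (Psync : A → B → ℕ∞)
    (as : List A) (bs : List B) (δ : ℕ → ℕ → ℕ∞)
    (hδ00 : δ 0 0 = 0)
    (hδL : ∀ i (hi : i < as.length), δ (i + 1) 0 = PL (as.get ⟨i, hi⟩) + δ i 0)
    (hδM : ∀ j (hj : j < bs.length), δ 0 (j + 1) = PM (bs.get ⟨j, hj⟩) + δ 0 j)
    (hδS : ∀ i j (hi : i < as.length) (hj : j < bs.length),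
      δ (i + 1) (j + 1) =
        min (Psync (as.get ⟨i, hi⟩) (bs.get ⟨j, hj⟩) + δ i j)
          (min (PL (as.get ⟨i, hi⟩) + δ i (j + 1))
            (PM (bs.get ⟨j, hj⟩) + δ (i + 1) j)))
    :
    ∀ i j, i ≤ as.length → j ≤ bs.length →
      ∀ γ : List (Option A × Option B),
        IsAlignment γ (as.take i) (bs.take j) →
          δ i j ≤ alignCost PL PM Psync γ := by
  have hL : ∀ i j (hi : i < as.length), j ≤ bs.length → δ (i + 1) j ≤ PL as[i] + δ i j := by
    rintro i (_ | j) hi hj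
    · exact (hδL i hi).le
    · rw [hδS i j hi hj]
      exact (min_le_right _ _).trans (min_le_left _ _)
  have hM : ∀ i j (hj : j < bs.length), i ≤ as.length → δ i (j + 1) ≤ PM bs[j] + δ i j := by
    rintro (_ | i) j hj hi
    · exact (hδM j hj).le
    · rw [hδS i j hi hj]
      exact (min_le_right _ _).trans (min_le_right _ _)
  have hS : ∀ i j (hi : i < as.length) (hj : j < bs.length),
      δ (i + 1) (j + 1) ≤ Psync as[i] bs[j] + δ i j := fun i j hi hj ↦
    (hδS i j hi hj).trans_le (min_le_left _ _)
  intro i j hi hj γ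
  exact le_alignCost_of_isAlignment_take hδ00 hL hM hS hi hj
end

section
/- For every i ≤ m and j ≤ n there exists an alignment γ of the first i elements of as and the first j elements of bs whose cost equals δ(i,j); in particular, the value δ(i,j) is attained by a concrete alignment obtained by the decoding construction. -/
/-!
Decoding the table: every entry `δ(i, j)` with `i + j > 0` equals the cost of one last move
plus an entry that is earlier in the lexicographic order on `(i, j)` (for `δ(i+1, j+1)`, the
one realizing the minimum). Appending that move to an alignment realizing the earlier entry
gives an alignment of the longer prefixes whose cost is the new entry.
-/

namespace IsAlignment

variable {A B : Type*}

theorem nil : IsAlignment ([] : List (Option A × Option B)) [] [] := by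
  simp [IsAlignment]

theorem append {γ γ' : List (Option A × Option B)} {as as' : List A} {bs bs' : List B}
    (h : IsAlignment γ as bs) (h' : IsAlignment γ' as' bs') :
    IsAlignment (γ ++ γ') (as ++ as') (bs ++ bs') := by
  obtain ⟨hγ, rfl, rfl⟩ := h
  obtain ⟨hγ', rfl, rfl⟩ := h'
  refine ⟨?_, List.filterMap_append, List.filterMap_append⟩
  intro m hm
  rcases List.mem_append.1 hm with hm | hm
  exacts [hγ m hm, hγ' m hm]

theorem singleton {m : Option A × Option B} (hm : m ≠ (none, none)) :
    IsAlignment [m] m.1.toList m.2.toList := by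
  obtain ⟨_ | a, _ | b⟩ := m <;> simp_all [IsAlignment]

end IsAlignment

section Decoding

variable {A B : Type*} (PL : A → ℕ∞) (PM : B → ℕ∞) (Psync : A → B → ℕ∞)

theorem alignCost_append (γ γ' : List (Option A × Option B)) :
    alignCost PL PM Psync (γ ++ γ') = alignCost PL PM Psync γ + alignCost PL PM Psync γ' := by
  simp [alignCost]

def HasAlignmentOfCost (xs : List A) (ys : List B) (c : ℕ∞) : Prop :=
  ∃ γ, IsAlignment γ xs ys ∧ alignCost PL PM Psync γ = c

variable {PL PM Psync} {xs : List A} {ys : List B} {c : ℕ∞}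

theorem HasAlignmentOfCost.nil : HasAlignmentOfCost PL PM Psync [] [] 0 :=
  ⟨[], .nil, rfl⟩

theorem HasAlignmentOfCost.snoc (h : HasAlignmentOfCost PL PM Psync xs ys c)
    {m : Option A × Option B} (hm : m ≠ (none, none)) :
    HasAlignmentOfCost PL PM Psync (xs ++ m.1.toList) (ys ++ m.2.toList)
      (moveCost PL PM Psync m + c) := by
  obtain ⟨γ, hγ, rfl⟩ := h
  refine ⟨γ ++ [m], hγ.append (.singleton hm), ?_⟩
  rw [alignCost_append, add_comm]
  simp [alignCost]

theorem HasAlignmentOfCost.snoc_log (h : HasAlignmentOfCost PL PM Psync xs ys c) (a : A) :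
    HasAlignmentOfCost PL PM Psync (xs ++ [a]) ys (PL a + c) := by
  simpa [moveCost] using h.snoc (m := (some a, none)) (by simp)

theorem HasAlignmentOfCost.snoc_model (h : HasAlignmentOfCost PL PM Psync xs ys c) (b : B) :
    HasAlignmentOfCost PL PM Psync xs (ys ++ [b]) (PM b + c) := by
  simpa [moveCost] using h.snoc (m := (none, some b)) (by simp)

theorem HasAlignmentOfCost.snoc_sync (h : HasAlignmentOfCost PL PM Psync xs ys c) (a : A) (b : B) :
    HasAlignmentOfCost PL PM Psync (xs ++ [a]) (ys ++ [b]) (Psync a b + c) := by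
  simpa [moveCost] using h.snoc (m := (some a, some b)) (by simp)

variable {as : List A} {bs : List B} {i j : ℕ}

theorem HasAlignmentOfCost.take_succ_left (hi : i < as.length)
    (h : HasAlignmentOfCost PL PM Psync (as.take i) (bs.take j) c) :
    HasAlignmentOfCost PL PM Psync (as.take (i + 1)) (bs.take j) (PL (as.get ⟨i, hi⟩) + c) := by
  rw [List.take_add_one, List.getElem?_eq_getElem hi]
  exact h.snoc_log _

theorem HasAlignmentOfCost.take_succ_right (hj : j < bs.length)
    (h : HasAlignmentOfCost PL PM Psync (as.take i) (bs.take j) c) :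
    HasAlignmentOfCost PL PM Psync (as.take i) (bs.take (j + 1)) (PM (bs.get ⟨j, hj⟩) + c) := by
  rw [List.take_add_one, List.getElem?_eq_getElem hj]
  exact h.snoc_model _

theorem HasAlignmentOfCost.take_succ_succ (hi : i < as.length) (hj : j < bs.length)
    (h : HasAlignmentOfCost PL PM Psync (as.take i) (bs.take j) c) :
    HasAlignmentOfCost PL PM Psync (as.take (i + 1)) (bs.take (j + 1))
      (Psync (as.get ⟨i, hi⟩) (bs.get ⟨j, hj⟩) + c) := by
  rw [List.take_add_one, List.take_add_one, List.getElem?_eq_getElem hi,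
    List.getElem?_eq_getElem hj]
  exact h.snoc_sync _ _

end Decoding

/-- The value δ(i,j) is attained by a concrete alignment of the prefixes. -/
theorem exists_alignment_cost_eq_delta
    {A B : Type*} (PL : A → ℕ∞) (PM : B → ℕ∞) (Psync : A → B → ℕ∞)
    (as : List A) (bs : List B) (δ : ℕ → ℕ → ℕ∞)
    (hδ00 : δ 0 0 = 0)
    (hδL : ∀ i (hi : i < as.length), δ (i + 1) 0 = PL (as.get ⟨i, hi⟩) + δ i 0)
    (hδM : ∀ j (hj : j < bs.length), δ 0 (j + 1) = PM (bs.get ⟨j, hj⟩) + δ 0 j)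
    (hδS : ∀ i j (hi : i < as.length) (hj : j < bs.length),
      δ (i + 1) (j + 1) =
        min (Psync (as.get ⟨i, hi⟩) (bs.get ⟨j, hj⟩) + δ i j)
          (min (PL (as.get ⟨i, hi⟩) + δ i (j + 1))
            (PM (bs.get ⟨j, hj⟩) + δ (i + 1) j)))
    :
    ∀ i j, i ≤ as.length → j ≤ bs.length →
      ∃ γ : List (Option A × Option B),
        IsAlignment γ (as.take i) (bs.take j) ∧
          alignCost PL PM Psync γ = δ i j := by
  suffices h : ∀ i j, i ≤ as.length → j ≤ bs.length →
      HasAlignmentOfCost PL PM Psync (as.take i) (bs.take j) (δ i j) from h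
  intro i
  induction i with
  | zero =>
    intro j _ hj
    induction j with
    | zero => rw [hδ00]; exact .nil
    | succ j ih => rw [hδM j hj]; exact (ih (by omega)).take_succ_right hj
  | succ i ihi =>
    intro j hi hj
    have hi' : i < as.length := hi
    induction j with
    | zero => rw [hδL i hi']; exact (ihi 0 (by omega) hj).take_succ_left hi'
    | succ j ihj =>
      have hj' : j < bs.length := hj
      rw [hδS i j hi' hj']
      rcases min_choice (Psync (as.get ⟨i, hi'⟩) (bs.get ⟨j, hj'⟩) + δ i j) _ with h | h
      · rw [h]; exact (ihi j (by omega) (by omega)).take_succ_succ hi' hj'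
      rw [h]
      rcases min_choice (PL (as.get ⟨i, hi'⟩) + δ i (j + 1)) _ with h | h
      · rw [h]; exact (ihi (j + 1) (by omega) hj).take_succ_left hi'
      · rw [h]; exact (ihj (by omega)).take_succ_right hj'
end

section
/- The value δ(m,n) equals the minimum, over all alignments γ of as = [a₁,…,a_m] and bs = [b₁,…,b_n], of the cost of γ; moreover this minimum is attained, i.e., there is an alignment of as and bs of cost δ(m,n) and every alignment of as and bs has cost at least δ(m,n). -/
/-!
Let `δ(i, j)` be the optimal cost of aligning the first `i` log events with the first `j` model
steps. Deleting the last move of an alignment of two prefixes leaves an alignment of shorter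
prefixes, and the recursion for `δ` is exactly the Bellman equation of this decomposition: `δ` is
at most the cost of any admissible last move plus `δ` at the shorter prefixes, and one of those
moves attains equality. The inequality gives the lower bound by induction on the alignment, the
attained case builds an optimal alignment by induction on the total length of the prefixes.
-/

section EditDistance

variable {A B : Type*}

theorem isAlignment_nil_iff {as : List A} {bs : List B} :
    IsAlignment ([] : List (Option A × Option B)) as bs ↔ as = [] ∧ bs = [] := by
  simp [IsAlignment, eq_comm]

theorem isAlignment_append_singleton_iff {γ : List (Option A × Option B)}
    {m : Option A × Option B} {as : List A} {bs : List B} :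
    IsAlignment (γ ++ [m]) as bs ↔ m ≠ (none, none) ∧
      ∃ as₀ bs₀, IsAlignment γ as₀ bs₀ ∧ as = as₀ ++ m.1.toList ∧ bs = bs₀ ++ m.2.toList := by
  have hfst : [m].filterMap Prod.fst = m.1.toList := by rcases m with ⟨_ | _, _⟩ <;> rfl
  have hsnd : [m].filterMap Prod.snd = m.2.toList := by rcases m with ⟨_, _ | _⟩ <;> rfl
  simp only [IsAlignment, List.mem_append, List.mem_singleton, List.filterMap_append, hfst, hsnd]
  constructor
  · rintro ⟨hne, rfl, rfl⟩
    exact ⟨hne m (Or.inr rfl), _, _, ⟨fun x hx => hne x (Or.inl hx), rfl, rfl⟩, rfl, rfl⟩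
  · rintro ⟨hm, as₀, bs₀, ⟨hne, rfl, rfl⟩, rfl, rfl⟩
    refine ⟨?_, rfl, rfl⟩
    rintro x (hx | rfl)
    exacts [hne x hx, hm]

theorem List.IsPrefix.getElem_length_of_append_singleton {α : Type*} {l L : List α} {a : α}
    (h : l ++ [a] <+: L) : ∃ hl : l.length < L.length, L[l.length] = a := by
  have hl : l.length < (l ++ [a]).length := by simp
  exact ⟨lt_of_lt_of_le hl h.length_le, by simpa using (h.getElem hl).symm⟩

structure IsEditDistance (PL : A → ℕ∞) (PM : B → ℕ∞) (Psync : A → B → ℕ∞)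
    (as : List A) (bs : List B) (δ : ℕ → ℕ → ℕ∞) : Prop where
  zero_zero : δ 0 0 = 0
  succ_zero : ∀ i (hi : i < as.length), δ (i + 1) 0 = PL (as.get ⟨i, hi⟩) + δ i 0
  zero_succ : ∀ j (hj : j < bs.length), δ 0 (j + 1) = PM (bs.get ⟨j, hj⟩) + δ 0 j
  succ_succ : ∀ i j (hi : i < as.length) (hj : j < bs.length),
    δ (i + 1) (j + 1) =
      min (Psync (as.get ⟨i, hi⟩) (bs.get ⟨j, hj⟩) + δ i j)
        (min (PL (as.get ⟨i, hi⟩) + δ i (j + 1)) (PM (bs.get ⟨j, hj⟩) + δ (i + 1) j))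

namespace IsEditDistance

variable {PL : A → ℕ∞} {PM : B → ℕ∞} {Psync : A → B → ℕ∞} {as : List A} {bs : List B}
  {δ : ℕ → ℕ → ℕ∞}

theorem succ_zero_of_prefix (hδ : IsEditDistance PL PM Psync as bs δ) {as₀ : List A} {a : A}
    (ha : as₀ ++ [a] <+: as) : δ (as₀.length + 1) 0 = PL a + δ as₀.length 0 := by
  obtain ⟨hl, rfl⟩ := ha.getElem_length_of_append_singleton
  exact hδ.succ_zero _ hl

theorem zero_succ_of_prefix (hδ : IsEditDistance PL PM Psync as bs δ) {bs₀ : List B} {b : B}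
    (hb : bs₀ ++ [b] <+: bs) : δ 0 (bs₀.length + 1) = PM b + δ 0 bs₀.length := by
  obtain ⟨hl, rfl⟩ := hb.getElem_length_of_append_singleton
  exact hδ.zero_succ _ hl

theorem succ_succ_of_prefix (hδ : IsEditDistance PL PM Psync as bs δ) {as₀ : List A} {a : A}
    {bs₀ : List B} {b : B} (ha : as₀ ++ [a] <+: as) (hb : bs₀ ++ [b] <+: bs) :
    δ (as₀.length + 1) (bs₀.length + 1) =
      min (Psync a b + δ as₀.length bs₀.length)
        (min (PL a + δ as₀.length (bs₀.length + 1)) (PM b + δ (as₀.length + 1) bs₀.length)) := by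
  obtain ⟨hla, rfl⟩ := ha.getElem_length_of_append_singleton
  obtain ⟨hlb, rfl⟩ := hb.getElem_length_of_append_singleton
  exact hδ.succ_succ _ _ hla hlb

theorem le_moveCost_add (hδ : IsEditDistance PL PM Psync as bs δ) {m : Option A × Option B}
    (hm : m ≠ (none, none)) {as₀ : List A} {bs₀ : List B} (ha : as₀ ++ m.1.toList <+: as)
    (hb : bs₀ ++ m.2.toList <+: bs) :
    δ (as₀ ++ m.1.toList).length (bs₀ ++ m.2.toList).length ≤
      moveCost PL PM Psync m + δ as₀.length bs₀.length := by
  rcases m with ⟨_ | a, _ | b⟩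
  · exact absurd rfl hm
  · simp only [Option.toList_none, Option.toList_some, List.append_nil, List.length_append,
      List.length_singleton, moveCost] at ha hb ⊢
    rcases List.eq_nil_or_concat' as₀ with rfl | ⟨as₁, a, rfl⟩
    · exact (hδ.zero_succ_of_prefix hb).le
    · simp only [List.length_append, List.length_singleton]
      rw [hδ.succ_succ_of_prefix ha hb]
      exact (min_le_right _ _).trans (min_le_right _ _)
  · simp only [Option.toList_none, Option.toList_some, List.append_nil, List.length_append,
      List.length_singleton, moveCost] at ha hb ⊢
    rcases List.eq_nil_or_concat' bs₀ with rfl | ⟨bs₁, b, rfl⟩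
    · exact (hδ.succ_zero_of_prefix ha).le
    · simp only [List.length_append, List.length_singleton]
      rw [hδ.succ_succ_of_prefix ha hb]
      exact (min_le_right _ _).trans (min_le_left _ _)
  · simp only [Option.toList_some, List.length_append, List.length_singleton, moveCost] at ha hb ⊢
    rw [hδ.succ_succ_of_prefix ha hb]
    exact min_le_left _ _

theorem exists_eq_moveCost_add (hδ : IsEditDistance PL PM Psync as bs δ) {as' : List A}
    {bs' : List B} (ha : as' <+: as) (hb : bs' <+: bs) (hne : ¬(as' = [] ∧ bs' = [])) :
    ∃ m : Option A × Option B, m ≠ (none, none) ∧ ∃ as₀ bs₀,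
      as' = as₀ ++ m.1.toList ∧ bs' = bs₀ ++ m.2.toList ∧
      δ as'.length bs'.length = moveCost PL PM Psync m + δ as₀.length bs₀.length := by
  rcases List.eq_nil_or_concat' as' with rfl | ⟨as₀, a, rfl⟩ <;>
    rcases List.eq_nil_or_concat' bs' with rfl | ⟨bs₀, b, rfl⟩
  · exact absurd ⟨rfl, rfl⟩ hne
  · exact ⟨(none, some b), by simp, [], bs₀, rfl, rfl,
      by simpa [moveCost] using hδ.zero_succ_of_prefix hb⟩
  · exact ⟨(some a, none), by simp, as₀, [], rfl, rfl,
      by simpa [moveCost] using hδ.succ_zero_of_prefix ha⟩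
  · have h := hδ.succ_succ_of_prefix ha hb
    simp only [List.length_append, List.length_singleton]
    rcases min_choice (Psync a b + δ as₀.length bs₀.length)
        (min (PL a + δ as₀.length (bs₀.length + 1)) (PM b + δ (as₀.length + 1) bs₀.length))
      with hsync | hrest
    · exact ⟨(some a, some b), by simp, as₀, bs₀, rfl, rfl, h.trans hsync⟩
    rcases min_choice (PL a + δ as₀.length (bs₀.length + 1))
        (PM b + δ (as₀.length + 1) bs₀.length) with hlog | hmodel
    · exact ⟨(some a, none), by simp, as₀, bs₀ ++ [b], rfl, by simp,
        by simpa [moveCost] using h.trans (hrest.trans hlog)⟩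
    · exact ⟨(none, some b), by simp, as₀ ++ [a], bs₀, by simp, rfl,
        by simpa [moveCost] using h.trans (hrest.trans hmodel)⟩

theorem le_alignCost (hδ : IsEditDistance PL PM Psync as bs δ) (γ : List (Option A × Option B))
    {as' : List A} {bs' : List B} (ha : as' <+: as) (hb : bs' <+: bs)
    (hγ : IsAlignment γ as' bs') : δ as'.length bs'.length ≤ alignCost PL PM Psync γ := by
  induction γ using List.reverseRecOn generalizing as' bs' with
  | nil =>
    obtain ⟨rfl, rfl⟩ := isAlignment_nil_iff.1 hγ
    simp [hδ.zero_zero]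
  | append_singleton γ m ih =>
    obtain ⟨hm, as₀, bs₀, hγ₀, rfl, rfl⟩ := isAlignment_append_singleton_iff.1 hγ
    calc δ (as₀ ++ m.1.toList).length (bs₀ ++ m.2.toList).length
        ≤ moveCost PL PM Psync m + δ as₀.length bs₀.length := hδ.le_moveCost_add hm ha hb
      _ ≤ moveCost PL PM Psync m + alignCost PL PM Psync γ :=
        add_le_add_right (ih ((List.prefix_append _ _).trans ha)
          ((List.prefix_append _ _).trans hb) hγ₀) _
      _ = alignCost PL PM Psync (γ ++ [m]) := by rw [alignCost_append_singleton, add_comm]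

theorem exists_isAlignment_alignCost_eq (hδ : IsEditDistance PL PM Psync as bs δ)
    {as' : List A} {bs' : List B} (ha : as' <+: as) (hb : bs' <+: bs) :
    ∃ γ, IsAlignment γ as' bs' ∧ alignCost PL PM Psync γ = δ as'.length bs'.length := by
  by_cases h0 : as' = [] ∧ bs' = []
  · obtain ⟨rfl, rfl⟩ := h0
    exact ⟨[], isAlignment_nil_iff.2 ⟨rfl, rfl⟩, by simp [alignCost, hδ.zero_zero]⟩
  obtain ⟨m, hm, as₀, bs₀, rfl, rfl, hδm⟩ := hδ.exists_eq_moveCost_add ha hb h0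
  have hshorter :
      as₀.length + bs₀.length < (as₀ ++ m.1.toList).length + (bs₀ ++ m.2.toList).length := by
    rcases m with ⟨_ | _, _ | _⟩
    · exact absurd rfl hm
    all_goals
      simp only [Option.toList_none, Option.toList_some, List.append_nil, List.length_append,
        List.length_singleton]
      omega
  obtain ⟨γ, hγ, hcost⟩ := hδ.exists_isAlignment_alignCost_eq
    ((List.prefix_append _ _).trans ha) ((List.prefix_append _ _).trans hb)
  refine ⟨γ ++ [m], isAlignment_append_singleton_iff.2 ⟨hm, _, _, hγ, rfl, rfl⟩, ?_⟩
  rw [alignCost_append_singleton, hcost, hδm, add_comm]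
termination_by as'.length + bs'.length

end IsEditDistance

end EditDistance

/-- δ(m,n) is the attained minimum of alignment cost over all alignments of as and bs. -/
theorem delta_eq_min_alignCost
    {A B : Type*} (PL : A → ℕ∞) (PM : B → ℕ∞) (Psync : A → B → ℕ∞)
    (as : List A) (bs : List B) (δ : ℕ → ℕ → ℕ∞)
    (hδ00 : δ 0 0 = 0)
    (hδL : ∀ i (hi : i < as.length), δ (i + 1) 0 = PL (as.get ⟨i, hi⟩) + δ i 0)
    (hδM : ∀ j (hj : j < bs.length), δ 0 (j + 1) = PM (bs.get ⟨j, hj⟩) + δ 0 j)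
    (hδS : ∀ i j (hi : i < as.length) (hj : j < bs.length),
      δ (i + 1) (j + 1) =
        min (Psync (as.get ⟨i, hi⟩) (bs.get ⟨j, hj⟩) + δ i j)
          (min (PL (as.get ⟨i, hi⟩) + δ i (j + 1))
            (PM (bs.get ⟨j, hj⟩) + δ (i + 1) j)))
    :
    (∃ γ : List (Option A × Option B),
        IsAlignment γ as bs ∧ alignCost PL PM Psync γ = δ as.length bs.length) ∧
    (∀ γ : List (Option A × Option B),
        IsAlignment γ as bs → δ as.length bs.length ≤ alignCost PL PM Psync γ) := by
  have hδ : IsEditDistance PL PM Psync as bs δ := ⟨hδ00, hδL, hδM, hδS⟩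
  exact ⟨hδ.exists_isAlignment_alignCost_eq (List.prefix_refl as) (List.prefix_refl bs),
    fun γ hγ => hδ.le_alignCost γ (List.prefix_refl as) (List.prefix_refl bs) hγ⟩
end
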